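/- Direction of descent: let x* minimize the convex quadratic model ϑ(x) = (1/2)xᵀQx + (g + ρCx₀)ᵀx over a convex set F containing x₀ (Q symmetric positive definite, C symmetric). Then the merit function ψ(x) = (1/2)xᵀ(Q + ρC)x + gᵀx satisfies ∇ψ(x₀)ᵀ(x* - x₀) ≤ 0, with strict inequality if x* ≠ x₀. -/

import Mathlib

/-!
The merit function ψ and the model ϑ have the same gradient at x₀, namely
`Q x₀ + g + ρ C x₀`. Since ϑ is quadratic, its exact second-order expansion around x₀ gives
`∇ϑ(x₀) ⬝ (x* - x₀) = ϑ(x*) - ϑ(x₀) - ½ (x* - x₀)ᵀ Q (x* - x₀)`, and both terms on the right are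
nonpositive because x* minimizes ϑ and Q is positive (semi)definite; the curvature term is
strictly negative once x* ≠ x₀.
-/

open Matrix

section QuadraticModel

variable {ι : Type*} [Fintype ι]

theorem Matrix.IsSymm.vecMul_eq_mulVec {R : Type*} [CommSemiring R] {Q : Matrix ι ι R}
    (hQ : Q.IsSymm) (x : ι → R) : x ᵥ* Q = Q *ᵥ x := by
  rw [← mulVec_transpose, hQ.eq]

noncomputable def quadraticModel (Q : Matrix ι ι ℝ) (b x : ι → ℝ) : ℝ :=
  (1 / 2) * (x ⬝ᵥ (Q *ᵥ x)) + b ⬝ᵥ x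

variable {Q : Matrix ι ι ℝ} {b : ι → ℝ}

theorem quadraticModel_eq_add_grad (hQ : Q.IsSymm) (x y : ι → ℝ) :
    quadraticModel Q b y = quadraticModel Q b x + (Q *ᵥ x + b) ⬝ᵥ (y - x)
      + (1 / 2) * ((y - x) ⬝ᵥ (Q *ᵥ (y - x))) := by
  obtain ⟨d, rfl⟩ : ∃ d, y = x + d := ⟨y - x, by abel⟩
  have hcross : x ⬝ᵥ (Q *ᵥ d) = (Q *ᵥ x) ⬝ᵥ d := by
    rw [dotProduct_mulVec, hQ.vecMul_eq_mulVec]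
  simp only [quadraticModel, add_sub_cancel_left, mulVec_add, dotProduct_add, add_dotProduct,
    hcross, dotProduct_comm d (Q *ᵥ x), dotProduct_comm b]
  ring

theorem grad_dotProduct_sub_nonpos_of_quadraticModel_le {x y : ι → ℝ} (hQ : Q.PosSemidef)
    (h : quadraticModel Q b y ≤ quadraticModel Q b x) : (Q *ᵥ x + b) ⬝ᵥ (y - x) ≤ 0 := by
  have hsymm : Q.IsSymm := by simpa using hQ.isHermitian
  have hcurv := hQ.dotProduct_mulVec_nonneg (y - x)
  rw [star_trivial] at hcurv
  linarith [quadraticModel_eq_add_grad (b := b) hsymm x y]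

theorem grad_dotProduct_sub_neg_of_quadraticModel_le {x y : ι → ℝ} (hQ : Q.PosDef)
    (h : quadraticModel Q b y ≤ quadraticModel Q b x) (hne : y ≠ x) :
    (Q *ᵥ x + b) ⬝ᵥ (y - x) < 0 := by
  have hsymm : Q.IsSymm := by simpa using hQ.isHermitian
  have hcurv := hQ.dotProduct_mulVec_pos (sub_ne_zero.mpr hne)
  rw [star_trivial] at hcurv
  linarith [quadraticModel_eq_add_grad (b := b) hsymm x y]

end QuadraticModel

theorem stmt_9_general {n : ℕ} (Q C : Matrix (Fin n) (Fin n) ℝ)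
    (hQ : Q.PosDef) (g x₀ : Fin n → ℝ) (ρ : ℝ)
    (F : Set (Fin n → ℝ)) (hx₀ : x₀ ∈ F)
    (xstar : Fin n → ℝ)
    (hmin : ∀ x ∈ F,
      (1 / 2) * (xstar ⬝ᵥ (Q *ᵥ xstar)) + (g + ρ • (C *ᵥ x₀)) ⬝ᵥ xstar ≤
      (1 / 2) * (x ⬝ᵥ (Q *ᵥ x)) + (g + ρ • (C *ᵥ x₀)) ⬝ᵥ x) :
    ((Q + ρ • C) *ᵥ x₀ + g) ⬝ᵥ (xstar - x₀) ≤ 0 ∧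
    (xstar ≠ x₀ → ((Q + ρ • C) *ᵥ x₀ + g) ⬝ᵥ (xstar - x₀) < 0) := by
  have hgrad : (Q + ρ • C) *ᵥ x₀ + g = Q *ᵥ x₀ + (g + ρ • (C *ᵥ x₀)) := by
    rw [add_mulVec, smul_mulVec]
    abel
  have hle : quadraticModel Q (g + ρ • (C *ᵥ x₀)) xstar ≤
      quadraticModel Q (g + ρ • (C *ᵥ x₀)) x₀ := hmin x₀ hx₀
  rw [hgrad]
  exact ⟨grad_dotProduct_sub_nonpos_of_quadraticModel_le hQ.posSemidef hle,
    grad_dotProduct_sub_neg_of_quadraticModel_le hQ hle⟩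

theorem stmt_9 {n : ℕ} (Q C : Matrix (Fin n) (Fin n) ℝ)
    (hQ : Q.PosDef) (hC : Cᵀ = C) (g x₀ : Fin n → ℝ) (ρ : ℝ)
    (F : Set (Fin n → ℝ)) (hF : Convex ℝ F) (hx₀ : x₀ ∈ F)
    (xstar : Fin n → ℝ) (hxstar : xstar ∈ F)
    (hmin : ∀ x ∈ F,
      (1 / 2) * (xstar ⬝ᵥ (Q *ᵥ xstar)) + (g + ρ • (C *ᵥ x₀)) ⬝ᵥ xstar ≤
      (1 / 2) * (x ⬝ᵥ (Q *ᵥ x)) + (g + ρ • (C *ᵥ x₀)) ⬝ᵥ x) :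
    ((Q + ρ • C) *ᵥ x₀ + g) ⬝ᵥ (xstar - x₀) ≤ 0 ∧
    (xstar ≠ x₀ → ((Q + ρ • C) *ᵥ x₀ + g) ⬝ᵥ (xstar - x₀) < 0) :=
  stmt_9_general Q C hQ g x₀ ρ F hx₀ xstar hmin
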